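/- Let α, β : ℝⁿ → (0,∞) be C² functions and ε > 0. Setting v = √((α+ε)(β+ε)), one has at every point Lv ≤ (1/(2v))((β+ε)Lα + (α+ε)Lβ) − Σᵢ (1/(4v³))((β+ε)Dᵢα − (α+ε)Dᵢβ)², where L u = Δu − ⟨x, ∇u⟩ is the Ornstein–Uhlenbeck operator. In particular Lv ≤ (1/(2v))((β+ε)Lα + (α+ε)Lβ). -/

import Mathlib

/-!
`L` is a diffusion operator: `L (φ ∘ w) = φ'(w) L w + φ''(w) |∇w|²` and
`L (a b) = a L b + b L a + 2 ⟨∇a, ∇b⟩`. Applying both with `φ = √·` and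
`w = (α + ε)(β + ε)`, and using `v² = w`, the first-order terms combine into the perfect square
`-|(β + ε) ∇α - (α + ε) ∇β|² / (4 v³) ≤ 0`.
-/

open scoped BigOperators

/-- `i`-th partial derivative. -/
noncomputable def pd (n : ℕ) (i : Fin n) (u : (Fin n → ℝ) → ℝ) : (Fin n → ℝ) → ℝ :=
  fun x => fderiv ℝ u x (Pi.single i 1)

/-- The Ornstein–Uhlenbeck operator `L u = Δu − ⟨x, ∇u⟩` on `ℝⁿ`. -/
noncomputable def OU (n : ℕ) (u : (Fin n → ℝ) → ℝ) : (Fin n → ℝ) → ℝ :=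
  fun x => (∑ i, pd n i (pd n i u) x) - ∑ i, x i * pd n i u x

section PartialDerivative

variable {n : ℕ} {i : Fin n} {f g : (Fin n → ℝ) → ℝ} {x : Fin n → ℝ}

theorem ContDiff.pd {k : ℕ} (hf : ContDiff ℝ (k + 1) f) (i : Fin n) :
    ContDiff ℝ k (pd n i f) :=
  (ContinuousLinearMap.apply ℝ ℝ (Pi.single i 1 : Fin n → ℝ)).contDiff.comp
    (hf.fderiv_right le_rfl)

theorem pd_add_const (c : ℝ) : pd n i (fun y => f y + c) = pd n i f := by
  ext x
  simp only [pd, fderiv_add_const]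

theorem pd_add (hf : DifferentiableAt ℝ f x) (hg : DifferentiableAt ℝ g x) :
    pd n i (fun y => f y + g y) x = pd n i f x + pd n i g x := by
  simp [pd, fderiv_fun_add hf hg]

theorem pd_mul (hf : DifferentiableAt ℝ f x) (hg : DifferentiableAt ℝ g x) :
    pd n i (fun y => f y * g y) x = f x * pd n i g x + g x * pd n i f x := by
  simp [pd, fderiv_fun_mul hf hg]

theorem pd_comp {φ : ℝ → ℝ} {φ' : ℝ} (hφ : HasDerivAt φ φ' (f x))
    (hf : DifferentiableAt ℝ f x) : pd n i (fun y => φ (f y)) x = φ' * pd n i f x := by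
  have h : HasFDerivAt (fun y => φ (f y)) (φ' • fderiv ℝ f x) x :=
    hφ.comp_hasFDerivAt x hf.hasFDerivAt
  simp [pd, h.fderiv]

end PartialDerivative

section OrnsteinUhlenbeck

variable {n : ℕ} {f g : (Fin n → ℝ) → ℝ}

theorem OU_add_const (c : ℝ) : OU n (fun y => f y + c) = OU n f := by
  ext x
  simp only [OU, pd_add_const]

theorem OU_mul (hf : ContDiff ℝ 2 f) (hg : ContDiff ℝ 2 g) (x : Fin n → ℝ) :
    OU n (fun y => f y * g y) x
      = f x * OU n g x + g x * OU n f x + 2 * ∑ i, pd n i f x * pd n i g x := by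
  have hf1 (i : Fin n) : Differentiable ℝ (pd n i f) := (hf.pd i).differentiable one_ne_zero
  have hg1 (i : Fin n) : Differentiable ℝ (pd n i g) := (hg.pd i).differentiable one_ne_zero
  have hf0 : Differentiable ℝ f := hf.differentiable two_ne_zero
  have hg0 : Differentiable ℝ g := hg.differentiable two_ne_zero
  have hpd (i : Fin n) :
      pd n i (fun y => f y * g y) = fun y => f y * pd n i g y + g y * pd n i f y :=
    funext fun y => pd_mul (hf0 y) (hg0 y)
  have hpd2 (i : Fin n) : pd n i (pd n i (fun y => f y * g y)) x
      = f x * pd n i (pd n i g) x + g x * pd n i (pd n i f) x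
        + 2 * (pd n i f x * pd n i g x) := by
    have hfg' : DifferentiableAt ℝ (fun y => f y * pd n i g y) x := (hf0 x).mul (hg1 i x)
    have hgf' : DifferentiableAt ℝ (fun y => g y * pd n i f y) x := (hg0 x).mul (hf1 i x)
    rw [hpd, pd_add hfg' hgf', pd_mul (hf0 x) (hg1 i x), pd_mul (hg0 x) (hf1 i x)]
    ring
  simp only [OU, hpd2]
  simp only [hpd, Finset.mul_sum, ← Finset.sum_add_distrib, ← Finset.sum_sub_distrib]
  exact Finset.sum_congr rfl fun i _ => by ring

theorem OU_comp {φ φ' φ'' : ℝ → ℝ} (hφ : ∀ y, HasDerivAt φ (φ' (f y)) (f y))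
    (hf : ContDiff ℝ 2 f) (x : Fin n → ℝ) (hφ' : HasDerivAt φ' (φ'' (f x)) (f x)) :
    OU n (fun y => φ (f y)) x = φ' (f x) * OU n f x + φ'' (f x) * ∑ i, pd n i f x ^ 2 := by
  have hf0 : Differentiable ℝ f := hf.differentiable two_ne_zero
  have hf1 (i : Fin n) : Differentiable ℝ (pd n i f) := (hf.pd i).differentiable one_ne_zero
  have hpd (i : Fin n) : pd n i (fun y => φ (f y)) = fun y => φ' (f y) * pd n i f y :=
    funext fun y => pd_comp (hφ y) (hf0 y)
  have hpd2 (i : Fin n) : pd n i (pd n i (fun y => φ (f y))) x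
      = φ' (f x) * pd n i (pd n i f) x + φ'' (f x) * pd n i f x ^ 2 := by
    have hφ'f : DifferentiableAt ℝ (fun y => φ' (f y)) x :=
      (hφ'.comp_hasFDerivAt x (hf0 x).hasFDerivAt).differentiableAt
    rw [hpd, pd_mul hφ'f (hf1 i x), pd_comp hφ' (hf0 x)]
    ring
  simp only [OU, hpd2]
  simp only [hpd, Finset.mul_sum, ← Finset.sum_add_distrib, ← Finset.sum_sub_distrib]
  exact Finset.sum_congr rfl fun i _ => by ring

theorem hasDerivAt_inv_two_mul_sqrt {t : ℝ} (ht : 0 < t) :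
    HasDerivAt (fun s => (2 * √s)⁻¹) (-(4 * √t ^ 3)⁻¹) t := by
  refine (((Real.hasDerivAt_sqrt ht.ne').const_mul 2).inv (by positivity)).congr_deriv ?_
  field_simp
  norm_num

theorem OU_sqrt (hf : ContDiff ℝ 2 f) (hpos : ∀ y, 0 < f y) (x : Fin n → ℝ) :
    OU n (fun y => √(f y)) x
      = (2 * √(f x))⁻¹ * OU n f x - (4 * √(f x) ^ 3)⁻¹ * ∑ i, pd n i f x ^ 2 := by
  rw [OU_comp (φ' := fun t => (2 * √t)⁻¹) (φ'' := fun t => -(4 * √t ^ 3)⁻¹)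
    (fun y => (Real.hasDerivAt_sqrt (hpos y).ne').congr_deriv (one_div _)) hf x
    (hasDerivAt_inv_two_mul_sqrt (hpos x))]
  ring

theorem OU_sqrt_mul (hf : ContDiff ℝ 2 f) (hg : ContDiff ℝ 2 g) (hpos : ∀ y, 0 < f y * g y)
    (x : Fin n → ℝ) :
    OU n (fun y => √(f y * g y)) x
      = 1 / (2 * √(f x * g x)) * (g x * OU n f x + f x * OU n g x)
        - ∑ i, 1 / (4 * √(f x * g x) ^ 3) * (g x * pd n i f x - f x * pd n i g x) ^ 2 := by
  have hfg : ContDiff ℝ 2 fun y => f y * g y := hf.mul hg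
  have hpd (i : Fin n) : pd n i (fun y => f y * g y) x = f x * pd n i g x + g x * pd n i f x :=
    pd_mul ((hf.differentiable two_ne_zero) x) ((hg.differentiable two_ne_zero) x)
  rw [OU_sqrt hfg hpos, OU_mul hf hg]
  simp only [hpd]
  set v := √(f x * g x)
  have hv : 0 < v := Real.sqrt_pos.2 (hpos x)
  have hv2 : v ^ 2 = f x * g x := Real.sq_sqrt (hpos x).le
  -- `v² = f g` turns `2 ∂f ∂g / (2v)` into `4 f g ∂f ∂g / (4v³)`, completing the square.
  have hterm (i : Fin n) : (2 * v)⁻¹ * (2 * (pd n i f x * pd n i g x))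
      - (4 * v ^ 3)⁻¹ * (f x * pd n i g x + g x * pd n i f x) ^ 2
      = -(1 / (4 * v ^ 3) * (g x * pd n i f x - f x * pd n i g x) ^ 2) := by
    field_simp
    linear_combination (4 * pd n i f x * pd n i g x) * hv2
  simp only [mul_add, Finset.mul_sum, add_sub_assoc, ← Finset.sum_sub_distrib, hterm,
    Finset.sum_neg_distrib]
  ring

end OrnsteinUhlenbeck

theorem OU_sqrt_supersolution (n : ℕ) (α β : (Fin n → ℝ) → ℝ)
    (hα : ContDiff ℝ 2 α) (hβ : ContDiff ℝ 2 β)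
    (hαpos : ∀ x, 0 < α x) (hβpos : ∀ x, 0 < β x)
    (ε : ℝ) (hε : 0 < ε)
    (v : (Fin n → ℝ) → ℝ) (hv : v = fun x => Real.sqrt ((α x + ε) * (β x + ε))) :
    ∀ x : Fin n → ℝ,
      OU n v x ≤ (1 / (2 * v x)) * ((β x + ε) * OU n α x + (α x + ε) * OU n β x)
          - ∑ i, (1 / (4 * v x ^ 3)) *
              ((β x + ε) * pd n i α x - (α x + ε) * pd n i β x) ^ 2 ∧
      OU n v x ≤ (1 / (2 * v x)) * ((β x + ε) * OU n α x + (α x + ε) * OU n β x) := by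
  subst hv
  intro x
  have key := OU_sqrt_mul (hα.add contDiff_const) (hβ.add contDiff_const)
    (fun y => mul_pos (by linarith [hαpos y]) (by linarith [hβpos y])) x
  simp only [OU_add_const, pd_add_const] at key
  have hsq : 0 ≤ ∑ i, 1 / (4 * √((α x + ε) * (β x + ε)) ^ 3) *
      ((β x + ε) * pd n i α x - (α x + ε) * pd n i β x) ^ 2 :=
    Finset.sum_nonneg fun i _ => by positivity
  exact ⟨key.le, by linarith⟩
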